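/- Let X be a real Banach space and let F ⊆ X** be a finite-dimensional linear subspace of the bidual such that the pre-annihilator F₀ = {ℓ ∈ X* : f(ℓ) = 0 for all f ∈ F} is weak-star closed in X* (closed in the topology of pointwise convergence on X). Let V = (F₀)₀ = {x ∈ X : ℓ(x) = 0 for all ℓ ∈ F₀}. Then dim(V) = dim(F) and λ(V, X) = λ(F, X**), where λ denotes the relative projection constant. -/

import Mathlib

/-!
Weak-star closedness of `F₀` says that `ann V = F₀`: a functional outside a weak-star closed
subspace is separated from it by a weak-star continuous functional, i.e. by a point of `X`.
Since `F` is finite-dimensional, `ann F₀ = F`, so `F = ann (ann V)`. The canonical isometry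
`J : X → X**` maps `V` into `ann (ann V)`, hence `V` is finite-dimensional, and then
`ann (ann V) = J(V)` because every functional on `V*` is an evaluation. So `J` identifies `V`
with `F`.

A projection `P` of `X` onto `V` gives the projection `P**` of `X**` onto `ann (ann V) = F`,
with `‖P**‖ ≤ ‖P‖`. Conversely, a projection `Q` of `X**` onto `F = J(V)` preserves `J(X)`, and
`J⁻¹ Q J` is a projection of `X` onto `V` of norm at most `‖Q‖`.
-/

open NormedSpace

noncomputable section

/-- The annihilator of a subspace `W ⊆ E` in the continuous dual `E*`. -/
def ann {E : Type*} [NormedAddCommGroup E] [NormedSpace ℝ E]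
    (W : Submodule ℝ E) : Submodule ℝ (StrongDual ℝ E) where
  carrier := {ℓ | ∀ w ∈ W, ℓ w = 0}
  add_mem' := by
    intro a b ha hb w hw
    simp [ha w hw, hb w hw]
  zero_mem' := by
    intro w hw
    simp
  smul_mem' := by
    intro c ℓ hℓ w hw
    simp [hℓ w hw]

/-- The pre-annihilator of a subspace `H ⊆ E*` in `E`. -/
def preAnn {E : Type*} [NormedAddCommGroup E] [NormedSpace ℝ E]
    (H : Submodule ℝ (StrongDual ℝ E)) : Submodule ℝ E where
  carrier := {x | ∀ ℓ ∈ H, ℓ x = 0}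
  add_mem' := by
    intro a b ha hb ℓ hℓ
    simp [ha ℓ hℓ, hb ℓ hℓ]
  zero_mem' := by
    intro ℓ hℓ
    simp
  smul_mem' := by
    intro c x hx ℓ hℓ
    simp [hx ℓ hℓ]

/-- A subspace of the continuous dual is weak-star closed if its image in `WeakDual ℝ E`
(the dual with the topology of pointwise convergence on `E`) is closed. -/
def IsWeakStarClosed {E : Type*} [NormedAddCommGroup E] [NormedSpace ℝ E]
    (H : Submodule ℝ (StrongDual ℝ E)) : Prop :=
  IsClosed (StrongDual.toWeakDual '' (H : Set (StrongDual ℝ E)))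

/-- The relative projection constant of a subspace `W` of a normed space `Y`:
the infimum of the operator norms of continuous linear projections of `Y` onto `W`. -/
def relProjConst {Y : Type*} [NormedAddCommGroup Y] [NormedSpace ℝ Y]
    (W : Submodule ℝ Y) : ℝ :=
  sInf {c | ∃ P : Y →L[ℝ] Y, P.comp P = P ∧ LinearMap.range (P : Y →ₗ[ℝ] Y) = W ∧ ‖P‖ = c}

end

theorem eq_zero_of_forall_lt_of_mem {M : Type*} [AddCommGroup M] [Module ℝ M]
    {S : Submodule ℝ M} {f : M →ₗ[ℝ] ℝ} {u : ℝ} (h : ∀ a ∈ S, f a < u) {a : M} (ha : a ∈ S) :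
    f a = 0 := by
  by_contra hfa
  have := h _ (S.smul_mem (u / f a) ha)
  rw [map_smul, smul_eq_mul, div_mul_cancel₀ _ hfa] at this
  exact lt_irrefl _ this

section Annihilators

variable {E : Type*} [NormedAddCommGroup E] [NormedSpace ℝ E]

theorem le_ann_preAnn (H : Submodule ℝ (StrongDual ℝ E)) : H ≤ ann (preAnn H) :=
  fun _ hℓ _ hx => hx _ hℓ

theorem preAnn_eq_dualCoannihilator (H : Submodule ℝ (StrongDual ℝ E)) :
    preAnn H = (H.map (ContinuousLinearMap.coeLM ℝ)).dualCoannihilator := by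
  ext x
  simp [preAnn, Submodule.mem_dualCoannihilator]

theorem ann_eq_comap_dualAnnihilator (W : Submodule ℝ E) :
    ann W = W.dualAnnihilator.comap (ContinuousLinearMap.coeLM ℝ) := by
  ext ℓ
  simp [ann, Submodule.mem_dualAnnihilator]

theorem ann_preAnn_of_finiteDimensional (F : Submodule ℝ (StrongDual ℝ E))
    [FiniteDimensional ℝ F] : ann (preAnn F) = F := by
  rw [preAnn_eq_dualCoannihilator, ann_eq_comap_dualAnnihilator,
    Subspace.dualCoannihilator_dualAnnihilator_eq,
    Submodule.comap_map_eq_of_injective ContinuousLinearMap.coe_injective]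

theorem ann_preAnn_of_isWeakStarClosed {H : Submodule ℝ (StrongDual ℝ E)}
    (hH : IsWeakStarClosed H) : ann (preAnn H) = H := by
  have : LocallyConvexSpace ℝ (WeakDual ℝ E) := WeakBilin.locallyConvexSpace
  refine le_antisymm (fun ℓ hℓ => ?_) (le_ann_preAnn H)
  by_contra hℓH
  set Hw : Submodule ℝ (WeakDual ℝ E) := H.map StrongDual.toWeakDual.toLinearMap
  have hHw : (Hw : Set (WeakDual ℝ E)) = StrongDual.toWeakDual '' H := Submodule.map_coe _ _
  have hℓHw : StrongDual.toWeakDual ℓ ∉ (Hw : Set (WeakDual ℝ E)) := by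
    rw [hHw, StrongDual.toWeakDual.injective.mem_set_image]
    exact hℓH
  obtain ⟨f, u, hfHw, hfℓ⟩ :=
    geometric_hahn_banach_closed_point Hw.convex (hHw ▸ hH) hℓHw
  obtain ⟨x, rfl⟩ := LinearMap.dualEmbedding_surjective (topDualPairing ℝ E) f
  have hx : x ∈ preAnn H := fun m hm =>
    eq_zero_of_forall_lt_of_mem (S := Hw) (f := (WeakBilin.eval _ x).toLinearMap) hfHw
      (a := StrongDual.toWeakDual m) (Submodule.mem_map_of_mem hm)
  have hu : 0 < u := hfHw 0 Hw.zero_mem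
  change u < ℓ x at hfℓ
  linarith [hℓ x hx]

theorem map_le_ann_ann (V : Submodule ℝ E) :
    V.map (inclusionInDoubleDualLi ℝ (E := E)).toLinearMap ≤ ann (ann V) := by
  rintro _ ⟨v, hv, rfl⟩ ℓ hℓ
  exact hℓ v hv

theorem ann_ann_eq_map_of_finiteDimensional (V : Submodule ℝ E) [FiniteDimensional ℝ V] :
    ann (ann V) = V.map (inclusionInDoubleDualLi ℝ (E := E)).toLinearMap := by
  refine le_antisymm (fun φ hφ => ?_) (map_le_ann_ann V)
  set ρ : StrongDual ℝ E →ₗ[ℝ] Module.Dual ℝ V :=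
    V.subtype.dualMap ∘ₗ ContinuousLinearMap.coeLM ℝ
  have hρ : Function.Surjective ρ :=
    SeparatingDual.dualMap_surjective_iff.mpr V.injective_subtype
  have hφρ : (φ : Module.Dual ℝ (StrongDual ℝ E)) ∈ LinearMap.range ρ.dualMap := by
    rw [LinearMap.range_dualMap_eq_dualAnnihilator_ker_of_surjective ρ hρ]
    refine (Submodule.mem_dualAnnihilator _).mpr fun ℓ hℓ => hφ ℓ fun v hv => ?_
    exact LinearMap.congr_fun hℓ ⟨v, hv⟩
  obtain ⟨g, hg⟩ := hφρ
  refine ⟨(Module.evalEquiv ℝ V).symm g, Submodule.coe_mem _, ContinuousLinearMap.ext fun ℓ => ?_⟩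
  exact (Module.apply_evalEquiv_symm_apply ℝ V (ρ ℓ) g).trans (LinearMap.congr_fun hg ℓ)

end Annihilators

namespace ContinuousLinearMap

variable {E F G : Type*} [NormedAddCommGroup E] [NormedSpace ℝ E] [NormedAddCommGroup F]
  [NormedSpace ℝ F] [NormedAddCommGroup G] [NormedSpace ℝ G]

theorem apply_eq_self_of_mem_range {P : E →L[ℝ] E} (hP : P.comp P = P) {x : E}
    (hx : x ∈ LinearMap.range (P : E →ₗ[ℝ] E)) : P x = x := by
  obtain ⟨y, rfl⟩ := hx
  exact DFunLike.congr_fun hP y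

noncomputable def dualMap (P : E →L[ℝ] F) : StrongDual ℝ F →L[ℝ] StrongDual ℝ E :=
  (compL ℝ E F ℝ).flip P

@[simp]
theorem dualMap_apply (P : E →L[ℝ] F) (ℓ : StrongDual ℝ F) : P.dualMap ℓ = ℓ.comp P :=
  rfl

theorem dualMap_comp (P : F →L[ℝ] G) (Q : E →L[ℝ] F) :
    (P.comp Q).dualMap = Q.dualMap.comp P.dualMap := by
  ext ℓ x
  simp

theorem norm_dualMap_le (P : E →L[ℝ] F) : ‖P.dualMap‖ ≤ ‖P‖ :=
  opNorm_le_bound _ (norm_nonneg P) fun ℓ => by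
    simpa only [dualMap_apply, mul_comm] using ℓ.opNorm_comp_le P

theorem dualMap_comp_self {P : E →L[ℝ] E} (hP : P.comp P = P) :
    P.dualMap.comp P.dualMap = P.dualMap := by
  rw [← dualMap_comp, hP]

theorem range_dualMap_dualMap {P : E →L[ℝ] E} (hP : P.comp P = P) :
    LinearMap.range
      (P.dualMap.dualMap : StrongDual ℝ (StrongDual ℝ E) →ₗ[ℝ] StrongDual ℝ (StrongDual ℝ E)) =
      ann (ann (LinearMap.range (P : E →ₗ[ℝ] E))) := by
  have hPann : ∀ ℓ ∈ ann (LinearMap.range (P : E →ₗ[ℝ] E)), ℓ.comp P = 0 := fun ℓ hℓ =>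
    ext fun x => hℓ (P x) (LinearMap.mem_range_self _ x)
  refine le_antisymm ?_ fun φ hφ => ⟨φ, ext fun ℓ => ?_⟩
  · rintro _ ⟨φ, rfl⟩ ℓ hℓ
    simp [hPann ℓ hℓ]
  · have hℓ : ℓ - ℓ.comp P ∈ ann (LinearMap.range (P : E →ₗ[ℝ] E)) := fun x hx => by
      simp [apply_eq_self_of_mem_range hP hx]
    have hφℓ := hφ _ hℓ
    rw [map_sub, sub_eq_zero] at hφℓ
    exact hφℓ.symm

end ContinuousLinearMap

section Projections

variable {X Y : Type*} [NormedAddCommGroup X] [NormedSpace ℝ X] [NormedAddCommGroup Y]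
  [NormedSpace ℝ Y]

theorem LinearIsometry.exists_apply_eq_of_forall_mem_range (J : X →ₗᵢ[ℝ] Y) (T : Y →L[ℝ] Y)
    (hT : ∀ x, T (J x) ∈ LinearMap.range J.toLinearMap) :
    ∃ S : X →L[ℝ] X, (∀ x, J (S x) = T (J x)) ∧ ‖S‖ ≤ ‖T‖ := by
  set e := LinearEquiv.ofInjective J.toLinearMap J.injective
  set S : X →ₗ[ℝ] X := e.symm ∘ₗ (T.toLinearMap ∘ₗ J.toLinearMap).codRestrict _ hT
  have hS : ∀ x, J (S x) = T (J x) := fun x => congrArg Subtype.val (e.apply_symm_apply _)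
  have hbound : ∀ x, ‖S x‖ ≤ ‖T‖ * ‖x‖ := fun x =>
    calc ‖S x‖ = ‖T (J x)‖ := by rw [← hS, J.norm_map]
      _ ≤ ‖T‖ * ‖J x‖ := T.le_opNorm _
      _ = ‖T‖ * ‖x‖ := by rw [J.norm_map]
  exact ⟨S.mkContinuous ‖T‖ hbound, hS, S.mkContinuous_norm_le (norm_nonneg T) hbound⟩

theorem exists_proj_of_proj_onto_map (J : X →ₗᵢ[ℝ] Y) (W : Submodule ℝ X) (Q : Y →L[ℝ] Y)
    (hQ : Q.comp Q = Q) (hQW : LinearMap.range (Q : Y →ₗ[ℝ] Y) = W.map J.toLinearMap) :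
    ∃ P : X →L[ℝ] X, P.comp P = P ∧ LinearMap.range (P : X →ₗ[ℝ] X) = W ∧ ‖P‖ ≤ ‖Q‖ := by
  have hQJ : ∀ x, Q (J x) ∈ W.map J.toLinearMap := fun x => hQW ▸ LinearMap.mem_range_self _ _
  obtain ⟨P, hJP, hP⟩ := J.exists_apply_eq_of_forall_mem_range Q fun x =>
    LinearMap.map_le_range (hQJ x)
  have hPW : ∀ x, P x ∈ W := fun x => by
    obtain ⟨y, hy, hJy⟩ := hQJ x
    rw [← hJP] at hJy
    exact J.injective hJy ▸ hy
  have hPfix : ∀ w ∈ W, P w = w := fun w hw => J.injective <| by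
    rw [hJP, ContinuousLinearMap.apply_eq_self_of_mem_range hQ
      (hQW ▸ Submodule.mem_map_of_mem hw)]
  refine ⟨P, ContinuousLinearMap.ext fun x => hPfix _ (hPW x), le_antisymm ?_ ?_, hP⟩
  · rintro _ ⟨x, rfl⟩
    exact hPW x
  · exact fun w hw => ⟨w, hPfix w hw⟩

theorem relProjConst_eq_of_forall_exists_le (V : Submodule ℝ X) (W : Submodule ℝ Y)
    (hVW : ∀ P : X →L[ℝ] X, P.comp P = P → LinearMap.range (P : X →ₗ[ℝ] X) = V →
      ∃ Q : Y →L[ℝ] Y, Q.comp Q = Q ∧ LinearMap.range (Q : Y →ₗ[ℝ] Y) = W ∧ ‖Q‖ ≤ ‖P‖)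
    (hWV : ∀ Q : Y →L[ℝ] Y, Q.comp Q = Q → LinearMap.range (Q : Y →ₗ[ℝ] Y) = W →
      ∃ P : X →L[ℝ] X, P.comp P = P ∧ LinearMap.range (P : X →ₗ[ℝ] X) = V ∧ ‖P‖ ≤ ‖Q‖) :
    relProjConst V = relProjConst W := by
  refine csInf_eq_csInf_of_forall_exists_le ?_ ?_
  · rintro _ ⟨P, hP, hPV, rfl⟩
    obtain ⟨Q, hQ, hQW, hQP⟩ := hVW P hP hPV
    exact ⟨_, ⟨Q, hQ, hQW, rfl⟩, hQP⟩
  · rintro _ ⟨Q, hQ, hQW, rfl⟩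
    obtain ⟨P, hP, hPV, hPQ⟩ := hWV Q hQ hQW
    exact ⟨_, ⟨P, hP, hPV, rfl⟩, hPQ⟩

end Projections

theorem finrank_eq_and_relProjConst_eq_general (X : Type*) [NormedAddCommGroup X]
    [NormedSpace ℝ X]
    (F : Submodule ℝ (StrongDual ℝ (StrongDual ℝ X)))
    (hFfd : Module.Finite ℝ F)
    (hF₀ : IsWeakStarClosed (preAnn F)) :
    Module.finrank ℝ (preAnn (preAnn F)) = Module.finrank ℝ F ∧
      relProjConst (Y := X) (preAnn (preAnn F)) = relProjConst (Y := StrongDual ℝ (StrongDual ℝ X)) F := by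
  set V := preAnn (preAnn F)
  set J := inclusionInDoubleDualLi ℝ (E := X)
  have hF : ann (ann V) = F := by
    rw [ann_preAnn_of_isWeakStarClosed hF₀, ann_preAnn_of_finiteDimensional]
  have : FiniteDimensional ℝ V :=
    have : FiniteDimensional ℝ (V.map J.toLinearMap) :=
      Submodule.finiteDimensional_of_le (hF ▸ map_le_ann_ann V)
    Module.Finite.equiv (Submodule.equivMapOfInjective _ J.injective V).symm
  have hVF : V.map J.toLinearMap = F := hF ▸ (ann_ann_eq_map_of_finiteDimensional V).symm
  refine ⟨hVF ▸ (Submodule.equivMapOfInjective _ J.injective V).finrank_eq, ?_⟩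
  refine relProjConst_eq_of_forall_exists_le (Y := StrongDual ℝ (StrongDual ℝ X)) V F
    (fun P hP hPV => ?_) fun Q hQ hQF => ?_
  · refine ⟨P.dualMap.dualMap, ?_, ?_, P.dualMap.norm_dualMap_le.trans P.norm_dualMap_le⟩
    · rw [ContinuousLinearMap.dualMap_comp_self (ContinuousLinearMap.dualMap_comp_self hP)]
    · rw [ContinuousLinearMap.range_dualMap_dualMap hP, hPV, hF]
  · exact exists_proj_of_proj_onto_map J V Q hQ (hQF.trans hVF.symm)

/-- Theorem (modified Theorem 3.2): if `F ⊆ X**` is finite-dimensional and its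
pre-annihilator `F₀ ⊆ X*` is weak-star closed, then `V = (F₀)₀` satisfies
`dim V = dim F` and `λ(V, X) = λ(F, X**)`. -/
theorem finrank_eq_and_relProjConst_eq (X : Type*) [NormedAddCommGroup X]
    [NormedSpace ℝ X] [CompleteSpace X]
    (F : Submodule ℝ (StrongDual ℝ (StrongDual ℝ X)))
    (hFfd : Module.Finite ℝ F)
    (hF₀ : IsWeakStarClosed (preAnn F)) :
    Module.finrank ℝ (preAnn (preAnn F)) = Module.finrank ℝ F ∧
      relProjConst (Y := X) (preAnn (preAnn F)) = relProjConst (Y := StrongDual ℝ (StrongDual ℝ X)) F :=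
  finrank_eq_and_relProjConst_eq_general X F hFfd hF₀
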